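/- FTRL regret identity: let Ψ_0*, …, Ψ_K* : ℝ^n → ℝ be differentiable convex functions, g_0, …, g_K ∈ ℝ^n, m_{-1} = 0, m_k = m_{k-1} + g_k, and x_{k+1} = −∇Ψ_k*(m_k) with x_0 = 0. Then for any fixed point u, Σ_{k=0}^{K} ⟨g_k, x_{k+1} − u⟩ = Ψ_0*(0) + ⟨−u, m_K⟩ − Ψ_K*(m_K) + Σ_{k=1}^{K} [Ψ_k*(m_{k-1}) − Ψ_{k-1}*(m_{k-1})] − Σ_{k=0}^{K} B_{Ψ_k*}(m_{k-1}; m_k), whenever ⟨−u, m_K⟩ is replaced by its supremum value used in the regret definition; in particular, with Reg_K^+ = max_{x : R(x) ≤ η} Σ_{k=0}^K ⟨g_k, x_{k+1} − x⟩ and dual norm R*(m) = max_{R(x) ≤ 1} ⟨m, x⟩, one has Reg_K^+ = Ψ_0*(0) + η R*(m_K) − Ψ_K*(m_K) + Σ_{k=1}^{K} [Ψ_k*(m_{k-1}) − Ψ_{k-1}*(m_{k-1})] − Σ_{k=0}^{K} B_{Ψ_k*}(m_{k-1}; m_k). -/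

import Mathlib

open Matrix
open scoped Classical

open scoped MatrixOrder in
/-- The positive semidefinite square root of a matrix (zero if not PSD). -/
noncomputable def sqrtM {n : ℕ} (A : Matrix (Fin n) (Fin n) ℝ) : Matrix (Fin n) (Fin n) ℝ :=
  if h : A.PosSemidef then CFC.sqrt A else 0

/-- Euclidean norm of a vector. -/
noncomputable def euclNorm {n : ℕ} (v : Fin n → ℝ) : ℝ := Real.sqrt (v ⬝ᵥ v)

/-- The ℓ₂ operator (spectral) norm of a matrix. -/
noncomputable def opNorm {n : ℕ} (A : Matrix (Fin n) (Fin n) ℝ) : ℝ :=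
  ⨆ u : {u : Fin n → ℝ // euclNorm u ≤ 1}, euclNorm (A *ᵥ u)

/-!
With `a_k = m_k - g_k = m_{k-1}`, the played loss is `⟨g_k, x_{k+1}⟩ = ⟨∇Ψ_k*(m_k), a_k - m_k⟩
= Ψ_k*(a_k) - Ψ_k*(m_k) - B_{Ψ_k*}(a_k; m_k)`, and the differences `Ψ_k*(a_k) - Ψ_k*(m_k)`
telescope, leaving `Ψ_0*(0) - Ψ_K*(m_K)` and the increments `Ψ_k* - Ψ_{k-1}*` at `m_{k-1}`.
The comparator enters only through the linear term `-⟨m_K, u⟩`; rescaling `u = -η v` turns its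
supremum over the `R`-ball of radius `η` into `η R*(m_K)`, which is finite because in finite
dimension every linear functional is bounded for the norm `R`.
-/

section NormSublevel

variable {E : Type*} [AddCommGroup E] [Module ℝ E] {R : E → ℝ}

lemma LinearMap.bddAbove_range_of_le_one [FiniteDimensional ℝ E]
    (hR0 : ∀ x, R x = 0 → x = 0) (hRs : ∀ (c : ℝ) x, R (c • x) = |c| * R x)
    (hRt : ∀ x y, R (x + y) ≤ R x + R y) (f : E →ₗ[ℝ] ℝ) :
    BddAbove (Set.range fun u : {u : E // R u ≤ 1} => f u) := by
  let : NormedAddCommGroup E := AddGroupNorm.toNormedAddCommGroup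
    { toFun := R
      map_zero' := by simpa using hRs 0 0
      add_le' := hRt
      neg' := fun x => by simpa using hRs (-1) x
      eq_zero_of_map_eq_zero' := hR0 }
  let : NormedSpace ℝ E := { norm_smul_le := fun c x => (hRs c x).le }
  let F := LinearMap.toContinuousLinearMap f
  refine ⟨‖F‖, ?_⟩
  rintro _ ⟨u, rfl⟩
  calc f u ≤ ‖F u‖ := le_abs_self _
    _ ≤ ‖F‖ * ‖(u : E)‖ := F.le_opNorm u
    _ ≤ ‖F‖ := mul_le_of_le_one_right (norm_nonneg F) u.2

lemma iSup_sublevel_eq_iSup_smul {α : Type*} [SupSet α]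
    (hRs : ∀ (c : ℝ) x, R (c • x) = |c| * R x) {η c : ℝ} (hη : 0 < η) (hc : |c| = η)
    (φ : E → α) :
    ⨆ u : {u : E // R u ≤ η}, φ u = ⨆ v : {v : E // R v ≤ 1}, φ (c • v) := by
  have hc0 : c ≠ 0 := by rintro rfl; simp only [abs_zero] at hc; exact hη.ne hc
  let scale : {v : E // R v ≤ 1} → {u : E // R u ≤ η} :=
    fun v => ⟨c • v, by rw [hRs, hc]; exact mul_le_of_le_one_right hη.le v.2⟩
  have hscale : Function.Surjective scale := fun u =>
    ⟨⟨c⁻¹ • u, by rw [hRs, abs_inv, hc, inv_mul_le_iff₀ hη, mul_one]; exact u.2⟩,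
      Subtype.ext (smul_inv_smul₀ hc0 _)⟩
  exact (hscale.iSup_comp fun u => φ u).symm

lemma iSup_sublevel_const_sub (hRs : ∀ (c : ℝ) x, R (c • x) = |c| * R x) {η : ℝ} (hη : 0 < η)
    (f : E →ₗ[ℝ] ℝ) (C : ℝ) (hf : BddAbove (Set.range fun u : {u : E // R u ≤ 1} => f u)) :
    ⨆ u : {u : E // R u ≤ η}, (C - f u) = C + η * ⨆ u : {u : E // R u ≤ 1}, f u := by
  have : Nonempty {u : E // R u ≤ 1} := ⟨⟨0, by simp [show R 0 = 0 by simpa using hRs 0 0]⟩⟩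
  have hηf : BddAbove (Set.range fun u : {u : E // R u ≤ 1} => η * f u) := by
    obtain ⟨B, hB⟩ := hf
    exact ⟨η * B, by
      rintro _ ⟨u, rfl⟩
      exact mul_le_mul_of_nonneg_left (hB ⟨u, rfl⟩) hη.le⟩
  rw [iSup_sublevel_eq_iSup_smul hRs hη (c := -η) (by simp [hη.le]) fun u => C - f u,
    Real.mul_iSup_of_nonneg hη.le, add_ciSup hηf]
  simp only [map_smul, smul_eq_mul, neg_mul, sub_neg_eq_add]

end NormSublevel

lemma sum_dotProduct_sub {ι m : Type*} [Fintype m] (s : Finset ι) (g X : ι → m → ℝ)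
    (u : m → ℝ) :
    ∑ k ∈ s, g k ⬝ᵥ (X k - u) = ∑ k ∈ s, g k ⬝ᵥ X k - (∑ k ∈ s, g k) ⬝ᵥ u := by
  simp only [dotProduct_sub, Finset.sum_sub_distrib, sum_dotProduct]

lemma sum_sub_telescope {V : Type*} [AddCommGroup V] (Ψ : ℕ → V → ℝ) (g m : ℕ → V)
    (hm : ∀ k, m k = ∑ i ∈ Finset.range (k + 1), g i) (K : ℕ) :
    ∑ k ∈ Finset.range (K + 1), (Ψ k (m k - g k) - Ψ k (m k))
      = Ψ 0 0 - Ψ K (m K)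
        + ∑ k ∈ Finset.Icc 1 K, (Ψ k (m k - g k) - Ψ (k - 1) (m k - g k)) := by
  have hprev : ∀ k, m (k + 1) - g (k + 1) = m k := fun k => by
    rw [hm, hm, Finset.sum_range_succ, add_sub_cancel_right]
  induction K with
  | zero => simp [hm 0]
  | succ K ih =>
    rw [Finset.sum_range_succ, ih, Finset.sum_Icc_succ_top (by omega), hprev,
      Nat.add_sub_cancel]
    ring

theorem ftrl_regret_identity_general {n K : ℕ} {η : ℝ} (hη : 0 < η)
    (Ψ : ℕ → (Fin n → ℝ) → ℝ) (Ψ' : ℕ → (Fin n → ℝ) → (Fin n → ℝ))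
    (R : (Fin n → ℝ) → ℝ)
    (hR0 : ∀ x, R x = 0 ↔ x = 0) (hRs : ∀ (c : ℝ) x, R (c • x) = |c| * R x)
    (hRt : ∀ x y, R (x + y) ≤ R x + R y)
    (g mseq X : ℕ → (Fin n → ℝ))
    (hm : ∀ k, mseq k = ∑ i ∈ Finset.range (k + 1), g i)
    (hX : ∀ k, X k = -(Ψ' k (mseq k))) :
    (⨆ u : {u : Fin n → ℝ // R u ≤ η}, ∑ k ∈ Finset.range (K + 1), g k ⬝ᵥ (X k - u.1))
    = Ψ 0 0 + η * (⨆ u : {u : Fin n → ℝ // R u ≤ 1}, mseq K ⬝ᵥ u.1) - Ψ K (mseq K)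
      + ∑ k ∈ Finset.Icc 1 K, (Ψ k (mseq k - g k) - Ψ (k - 1) (mseq k - g k))
      - ∑ k ∈ Finset.range (K + 1),
          (Ψ k (mseq k - g k) - Ψ k (mseq k) - Ψ' k (mseq k) ⬝ᵥ (mseq k - g k - mseq k)) := by
  have hloss : ∑ k ∈ Finset.range (K + 1), g k ⬝ᵥ X k
      = ∑ k ∈ Finset.range (K + 1), (Ψ k (mseq k - g k) - Ψ k (mseq k))
        - ∑ k ∈ Finset.range (K + 1),
          (Ψ k (mseq k - g k) - Ψ k (mseq k) - Ψ' k (mseq k) ⬝ᵥ (mseq k - g k - mseq k)) := by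
    rw [← Finset.sum_sub_distrib]
    refine Finset.sum_congr rfl fun k _ => ?_
    rw [hX, sub_sub_cancel_left, dotProduct_neg, dotProduct_neg, dotProduct_comm]
    ring
  have hsup : ∀ C, ⨆ u : {u : Fin n → ℝ // R u ≤ η}, (C - mseq K ⬝ᵥ u.1)
      = C + η * ⨆ u : {u : Fin n → ℝ // R u ≤ 1}, mseq K ⬝ᵥ u.1 :=
    let dual := dotProductBilin ℝ ℝ (mseq K)
    fun C => iSup_sublevel_const_sub hRs hη dual C <|
      dual.bddAbove_range_of_le_one (fun x => (hR0 x).mp) hRs hRt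
  simp only [sum_dotProduct_sub, ← hm K]
  rw [hsup, hloss, sum_sub_telescope Ψ g mseq hm K]
  ring

theorem ftrl_regret_identity {n K : ℕ} {η : ℝ} (hη : 0 < η)
    (Ψ : ℕ → (Fin n → ℝ) → ℝ) (Ψ' : ℕ → (Fin n → ℝ) → (Fin n → ℝ))
    (hconv : ∀ k, ConvexOn ℝ Set.univ (Ψ k))
    (hgrad : ∀ k (m : Fin n → ℝ),
      HasGradientAt (fun x : EuclideanSpace ℝ (Fin n) => Ψ k ((WithLp.equiv 2 (Fin n → ℝ)) x))
        ((WithLp.equiv 2 (Fin n → ℝ)).symm (Ψ' k m)) ((WithLp.equiv 2 (Fin n → ℝ)).symm m))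
    (R : (Fin n → ℝ) → ℝ)
    (hR0 : ∀ x, R x = 0 ↔ x = 0) (hRs : ∀ (c : ℝ) x, R (c • x) = |c| * R x)
    (hRt : ∀ x y, R (x + y) ≤ R x + R y)
    (g mseq X : ℕ → (Fin n → ℝ))
    (hm : ∀ k, mseq k = ∑ i ∈ Finset.range (k + 1), g i)
    (hX : ∀ k, X k = -(Ψ' k (mseq k))) :
    (⨆ u : {u : Fin n → ℝ // R u ≤ η}, ∑ k ∈ Finset.range (K + 1), g k ⬝ᵥ (X k - u.1))
    = Ψ 0 0 + η * (⨆ u : {u : Fin n → ℝ // R u ≤ 1}, mseq K ⬝ᵥ u.1) - Ψ K (mseq K)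
      + ∑ k ∈ Finset.Icc 1 K, (Ψ k (mseq k - g k) - Ψ (k - 1) (mseq k - g k))
      - ∑ k ∈ Finset.range (K + 1),
          (Ψ k (mseq k - g k) - Ψ k (mseq k) - Ψ' k (mseq k) ⬝ᵥ (mseq k - g k - mseq k)) :=
  ftrl_regret_identity_general hη Ψ Ψ' R hR0 hRs hRt g mseq X hm hX
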